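/- Let s, t ≥ 1 and integers 0 = a_0 ≤ a_1 ≤ ... ≤ a_t, and let X = P(O(a_0) ⊕ ... ⊕ O(a_t)) over P^s. Suppose D ∈ |O(c; d)| with d > 0 is a divisor such that (X, D) is a log Fano manifold with log Fano pseudoindex ι and ι ≥ t. Then d = 1, t = ι, and s ≥ ι - 1. Moreover, if s = ι - 1, then a_1 = ... = a_{ι-1} = 0 and c = -a_ι. -/

import Mathlib

/-!
The fiber line gives `ι ≤ t + 1 - d`, so `ι ≥ t` and `d > 0` force `d = 1` and `ι = t`.
Split `∑_{i=1}^{t} aᵢ = ∑_{i=1}^{t-1} aᵢ + a_t`; all `aᵢ ≥ 0`, and `a_t + c ≥ 0` because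
`|𝒪(c; 1)| ≠ ∅`. The section line then gives
`ι + ∑_{i=1}^{t-1} aᵢ + (a_t + c) ≤ s + 1`, a sum of `ι` and two nonnegative terms, so
`ι - 1 ≤ s`, and equality forces both terms, hence every `aᵢ` with `1 ≤ i < ι`, to vanish.
-/

open Finset

theorem apply_zero_le_of_forall_lt_le_succ {α : Type*} [Preorder α] {a : ℕ → α} {t : ℕ}
    (h : ∀ i, i < t → a i ≤ a (i + 1)) : ∀ {i}, i ≤ t → a 0 ≤ a i
  | 0, _ => le_rfl
  | i + 1, hi => (apply_zero_le_of_forall_lt_le_succ h (by omega)).trans (h i (by omega))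

theorem sum_Icc_eq_sum_Ico_add_of_le {α M : Type*} [LinearOrder α] [LocallyFiniteOrder α]
    [AddCommMonoid M] (f : α → M) {m n : α} (hmn : m ≤ n) :
    ∑ i ∈ Icc m n, f i = ∑ i ∈ Ico m n, f i + f n := by
  rw [← Ico_insert_right hmn, sum_insert right_notMem_Ico, add_comm]

theorem scroll_log_fano_pseudoindex_ge_t_general
    (s t : ℕ) (ht : 1 ≤ t)
    (a : ℕ → ℤ) (ha0 : a 0 = 0) (hmono : ∀ i, i < t → a i ≤ a (i + 1))
    (c d : ℤ) (hd : 0 < d)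
    (ι : ℕ)
    -- pseudoindex ≤ intersection of -(K_X+D) with a line in a fiber:
    (hfiber : (ι : ℤ) ≤ t + 1 - d)
    -- pseudoindex ≤ intersection of -(K_X+D) with a line in the section ℙ(𝒪(a₀)):
    (hsection : (ι : ℤ) ≤ s + 1 - (∑ i ∈ Finset.Icc 1 t, a i) - c)
    -- |𝒪(c;d)| ≠ ∅:
    (hnonempty : -(d * a t) ≤ c)
    -- the assumption ι ≥ t:
    (hιt : t ≤ ι) :
    d = 1 ∧ t = ι ∧ ι - 1 ≤ s ∧
      (s = ι - 1 → (∀ i, 1 ≤ i → i ≤ ι - 1 → a i = 0) ∧ c = -(a ι)) := by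
  have ha : ∀ i, i ≤ t → 0 ≤ a i := fun i hi => ha0 ▸ apply_zero_le_of_forall_lt_le_succ hmono hi
  have hd1 : d = 1 := by omega
  have htι : t = ι := by omega
  subst hd1 htι
  rw [sum_Icc_eq_sum_Ico_add_of_le a ht] at hsection
  have hprefix : 0 ≤ ∑ i ∈ Ico 1 t, a i := sum_nonneg fun i hi => ha i (mem_Ico.1 hi).2.le
  refine ⟨rfl, rfl, by omega, fun hst => ⟨fun i hi₁ hi₂ => ?_, by omega⟩⟩
  have hprefix_zero : ∑ i ∈ Ico 1 t, a i = 0 := by omega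
  exact (sum_eq_zero_iff_of_nonneg fun j hj => ha j (mem_Ico.1 hj).2.le).1 hprefix_zero i
    (mem_Ico.2 ⟨hi₁, by omega⟩)

theorem scroll_log_fano_pseudoindex_ge_t
    (s t : ℕ) (hs : 1 ≤ s) (ht : 1 ≤ t)
    (a : ℕ → ℤ) (ha0 : a 0 = 0) (hmono : ∀ i, i < t → a i ≤ a (i + 1))
    (c d : ℤ) (hd : 0 < d)
    (ι : ℕ) (hι : 1 ≤ ι)
    -- pseudoindex ≤ intersection of -(K_X+D) with a line in a fiber:
    (hfiber : (ι : ℤ) ≤ t + 1 - d)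
    -- pseudoindex ≤ intersection of -(K_X+D) with a line in the section ℙ(𝒪(a₀)):
    (hsection : (ι : ℤ) ≤ s + 1 - (∑ i ∈ Finset.Icc 1 t, a i) - c)
    -- |𝒪(c;d)| ≠ ∅:
    (hnonempty : -(d * a t) ≤ c)
    -- ampleness of -(K_X+D):
    (hample₁ : 0 < (t : ℤ) + 1 - d)
    (hample₂ : 0 < (s : ℤ) + 1 - (∑ i ∈ Finset.Icc 1 t, a i) - c)
    -- the assumption ι ≥ t:
    (hιt : t ≤ ι) :
    d = 1 ∧ t = ι ∧ ι - 1 ≤ s ∧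
      (s = ι - 1 → (∀ i, 1 ≤ i → i ≤ ι - 1 → a i = 0) ∧ c = -(a ι)) :=
  scroll_log_fano_pseudoindex_ge_t_general s t ht a ha0 hmono c d hd ι hfiber hsection hnonempty hιt
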